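/- arXiv:math/9903181 — 2 statements merged into one kernel-verified Lean document; each statement's English description precedes it below -/
import Mathlib

section
/- Apply the construction of the Chevalley operators both at level n and at level kn (k ≥ 2), using constants c^{(kn)}_j ∈ ℚ (j ∈ ℤ/knℤ) at level kn and c^{(n)}_i = Σ_{j ∈ ℤ/knℤ, j ≡ i (mod n)} c^{(kn)}_j at level n. Then for every i ∈ ℤ/nℤ the algebra homomorphism ζ intertwines the Chevalley operators: e_i^{T,(n)} ∘ ζ = ζ ∘ (Σ_{j ≡ i (mod n)} e_j^{T,(kn)}), f_i^{T,(n)} ∘ ζ = ζ ∘ (Σ_{j ≡ i (mod n)} f_j^{T,(kn)}), and h_i^{T,(n)} ∘ ζ = ζ ∘ (Σ_{j ≡ i (mod n)} h_j^{T,(kn)}). -/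
/-!
Common setup: raiz for the cyclic quiver `Ã_{n-1}`, the polynomial algebra
`N = ℚ[x_θ : θ ∈ R⁺(n)]`, and the locally finite differential operators
`E(θ)`, `Ẽ(θ)`, `B(θ)`, `𝔅_i`, `𝔈_i`, `Δ_i`, and the Chevalley operators
`e_i^T`, `h_i^T`, `f_i^T`, following Finkelberg–Kuznetsov.
-/

open MvPolynomial

/-- A raiz for the cyclic quiver with `n` vertices: a pair `(p,q)` of integers with
`p ≤ q`, modulo simultaneous translation of both entries by `n`; it is faithfully
encoded by the ending class `q mod n : ZMod n` together with the (positive) length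
`q - p + 1 : ℕ+`. -/
abbrev Raiz (n : ℕ) : Type := ZMod n × ℕ+

namespace Raiz

variable {n : ℕ}

/-- The class at which a raiz begins: for `(p,q)` this is `p mod n = (q - len + 1) mod n`. -/
def beg (θ : Raiz n) : ZMod n := θ.1 - ((θ.2 : ℕ) : ZMod n) + 1

/-- `θ = (p,q)` ends at `i` iff `q ≡ i (mod n)`. -/
def Ends (θ : Raiz n) (i : ZMod n) : Prop := θ.1 = i

/-- `θ = (p,q)` begins at `i` iff `p ≡ i (mod n)`. -/
def Begins (θ : Raiz n) (i : ZMod n) : Prop := beg θ = i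

/-- The simple raiz `(i,i)`. -/
def simple (i : ZMod n) : Raiz n := (i, 1)

/-- The concatenation `ϑ⌣θ`: it is defined (`some`) exactly when `θ` begins at the
class following the class at which `ϑ` ends; for `ϑ = (a,b)` ending at `i-1` and
`θ = (p,q)` beginning at `i` it is `(a, b+q-p+1)`, i.e. it ends where `θ` ends and
its length is the sum of the lengths. -/
def cat (ϑ θ : Raiz n) : Option (Raiz n) :=
  if beg θ = ϑ.1 + 1 then some (θ.1, ϑ.2 + θ.2) else none

/-- `dimAt θ j` is the number of integers in `[p,q]` congruent to `j` mod `n`: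
the dimension vector `dim θ ∈ ℕ^{ℤ/nℤ}` of the raiz `θ`. -/
def dimAt (θ : Raiz n) (j : ZMod n) : ℕ :=
  ((Finset.range (θ.2 : ℕ)).filter (fun t => θ.1 - ((t : ℕ) : ZMod n) = j)).card

end Raiz

/-- The polynomial algebra `N = ℚ[x_θ : θ ∈ R⁺(n)]`. -/
abbrev Pol (n : ℕ) := MvPolynomial (Raiz n) ℚ

/-- Operators on `N`. -/
abbrev Op (n : ℕ) := Pol n → Pol n

noncomputable section

/-- The locally finite differential operator `Σ_η c(η)·∂/∂x_η`: applied to a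
polynomial `P` only the (finitely many) variables occurring in `P` contribute,
since `∂P/∂x_η = 0` for `η ∉ vars P`. -/
def diffOp {n : ℕ} (c : Raiz n → Pol n) : Op n :=
  fun P => ∑ η ∈ P.vars, c η * pderiv η P

/-- `Ẽ(θ) = Σ_{ϑ ∈ E_{i-1}} x_ϑ ∂/∂x_{ϑ⌣θ}` for a raiz `θ` beginning at `i`: the
term `ϑ = 0` contributes `∂/∂x_θ` (as `x_0 = 1` and `0⌣θ = θ`), and a nonzero `ϑ`
ending at `i-1` contributes at the variable `η = ϑ⌣θ`, i.e. at `η` with the same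
end as `θ` and `len η > len θ`, with coefficient `x_ϑ`, where
`ϑ = (beg θ - 1, len η - len θ)`. -/
def Etil {n : ℕ} (θ : Raiz n) : Op n :=
  diffOp (fun η =>
    if η = θ then 1
    else if η.1 = θ.1 ∧ θ.2 < η.2 then X ((Raiz.beg θ - 1, η.2 - θ.2) : Raiz n) else 0)

/-- `E(θ) = Σ_{ϑ ∈ E_{i-1}} x_{ϑ⌣θ} ∂/∂x_ϑ` for a raiz `θ` beginning at `i`
(the `ϑ = 0` term vanishes since `∂/∂x_0 = 0`). -/
def Eop {n : ℕ} (θ : Raiz n) : Op n :=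
  diffOp (fun ϑ => if ϑ.1 = Raiz.beg θ - 1 then X ((θ.1, ϑ.2 + θ.2) : Raiz n) else 0)

/-- `B(θ) = Σ_{ϑ ∈ B_{i+1}} x_{θ⌣ϑ} ∂/∂x_ϑ` for a raiz `θ` ending at `i`
(the `ϑ = 0` term vanishes since `∂/∂x_0 = 0`). -/
def Bop {n : ℕ} (θ : Raiz n) : Op n :=
  diffOp (fun ϑ => if Raiz.beg ϑ = θ.1 + 1 then X ((ϑ.1, θ.2 + ϑ.2) : Raiz n) else 0)

/-- `𝔅_i = Σ_{0 ≠ θ ∈ B_{i+1}} x_θ ∂/∂x_θ`. -/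
def Bfrak {n : ℕ} (i : ZMod n) : Op n :=
  diffOp (fun θ => if Raiz.beg θ = i + 1 then X θ else 0)

/-- `𝔈_i = Σ_{0 ≠ θ ∈ E_{i-1}} x_θ ∂/∂x_θ`. -/
def Efrak {n : ℕ} (i : ZMod n) : Op n :=
  diffOp (fun θ => if θ.1 = i - 1 then X θ else 0)

/-- The commutator `[f,g] = f∘g - g∘f` of two operators. -/
def brak {n : ℕ} (f g : Op n) : Op n := fun P => f (g P) - g (f P)

/-- Multiplication by `x_θ` as an operator on `N`. -/
def mulX {n : ℕ} (θ : Raiz n) : Op n := fun P => X θ * P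

/-- Extend a raiz-indexed family of operators to `Option (Raiz n)`: a term with
an undefined concatenation is declared to be `0`. -/
def opt {n : ℕ} (F : Raiz n → Op n) : Option (Raiz n) → Op n
  | none => 0
  | some θ => F θ

/-- `Δ_i = 𝔅_{i-1} - 𝔅_i + c_i`, for a fixed family of constants `c`. -/
def Delta {n : ℕ} (c : ZMod n → ℚ) (i : ZMod n) : Op n :=
  fun P => Bfrak (i - 1) P - Bfrak i P + c i • P

/-- The Chevalley operator `e_i^T = Ẽ(i)`. -/
def eT {n : ℕ} (i : ZMod n) : Op n := Etil (Raiz.simple i)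

/-- The Chevalley operator `h_i^T = 𝔈_{i+1} - 𝔈_i + Δ_i`. -/
def hT {n : ℕ} (c : ZMod n → ℚ) (i : ZMod n) : Op n :=
  fun P => Efrak (i + 1) P - Efrak i P + Delta c i P

/-- The Chevalley operator `f_i^T = B(i) - E(i) + x_i·Δ_i`. -/
def fT {n : ℕ} (c : ZMod n → ℚ) (i : ZMod n) : Op n :=
  fun P => Bop (Raiz.simple i) P - Eop (Raiz.simple i) P + X (Raiz.simple i) * Delta c i P

/-- The affine Cartan matrix of type `Ã_{n-1}` (for `n ≥ 2`): `a_ii = 2`;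
`a_ij = -1` if `j = i±1` and `n ≠ 2`; `a_ij = -2` if `n = 2` and `j = i+1 ≠ i`;
`a_ij = 0` otherwise. -/
def cartan (n : ℕ) (i j : ZMod n) : ℤ :=
  if j = i then 2
  else if n = 2 then -2
  else if j = i + 1 ∨ j = i - 1 then -1
  else 0

/-- The projection `ζ : R⁺(m) → R⁺(n)` for `n ∣ m`: the class of `(p,q)` modulo `m`
is sent to its class modulo `n`. -/
def Raiz.zetaR {n m : ℕ} (h : n ∣ m) : Raiz m → Raiz n :=
  fun θ => (ZMod.castHom h (ZMod n) θ.1, θ.2)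

/-- The induced `ℚ`-algebra homomorphism `ζ : ℚ[x_ϑ : ϑ ∈ R⁺(m)] → ℚ[x_θ : θ ∈ R⁺(n)]`,
`x_ϑ ↦ x_{ζ(ϑ)}`. -/
def zeta {n m : ℕ} (h : n ∣ m) : Pol m →ₐ[ℚ] Pol n :=
  MvPolynomial.rename (Raiz.zetaR h)

/-- The natural-number representatives in `[0, m)` of the residues `≡ i (mod n)`:
for `n ∣ m` these enumerate (via `ℕ → ZMod m`) exactly the classes `j ∈ ℤ/mℤ` with
`j ≡ i (mod n)`. -/
def fiber (n m : ℕ) (i : ZMod n) : Finset ℕ :=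
  (Finset.range m).filter (fun t => ((t : ZMod n) = i))

/-- All raiz of level `n` with length at most `m`. -/
def raizUpTo (n m : ℕ) : Finset (Raiz n) :=
  ((Finset.range n).image (fun a : ℕ => ((a : ZMod n)))) ×ˢ
    ((Finset.range m).image (fun l : ℕ => (⟨l + 1, Nat.succ_pos l⟩ : ℕ+)))

open Classical in
/-- Kostant partitions of the dimension vector `γ`, as multisets `κ` of raiz with
`Σ_{θ ∈ κ} dim θ = γ`; the parameter `m` bounds the lengths of parts and the
multiplicities, so for `Σ_j γ(j) ≤ m` this is the set of all Kostant partitions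
of `γ`. -/
def kostant (n : ℕ) (γ : ZMod n → ℕ) (m : ℕ) : Finset (Multiset (Raiz n)) :=
  ((m • (raizUpTo n m).val).powerset.toFinset).filter
    (fun κ => ∀ j, (κ.map (fun θ => θ.dimAt j)).sum = γ j)

/-- The monomial `x^κ` attached to a Kostant partition `κ`. -/
def xPow {n : ℕ} (κ : Multiset (Raiz n)) : Pol n :=
  (κ.map (fun θ => (X θ : Pol n))).prod

/-- `P_n = Σ_{κ ∈ 𝔎(α_n)} (-1)^{K(κ)+1} x^κ`: the sum is over all Kostant partitions
of the all-ones dimension vector `α_n` (all of whose parts have length `≤ n` and which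
have at most `n` parts). -/
def Ppoly (n : ℕ) : Pol n :=
  ∑ κ ∈ kostant n (fun _ => 1) n, ((-1 : ℚ) ^ (Multiset.card κ + 1)) • xPow κ

open Classical in
/-- `a_p = Σ_{θ : dim θ = p·α_n} Ẽ(θ)` for `p ≥ 1` (a finite sum: such `θ` have
length `p·n`). -/
def aPos (n p : ℕ) : Op n :=
  fun P => ∑ θ ∈ (raizUpTo n (p * n)).filter (fun θ => ∀ j, θ.dimAt j = p), Etil θ P

/-- `a_{-p}`: `c₀` times the operator of multiplication by `ζ(P_{pn})`, for `p ≥ 1`. -/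
def aNeg (n : ℕ) (c₀ : ℚ) (p : ℕ) : Op n :=
  fun P => c₀ • (zeta (dvd_mul_left n p) (Ppoly (p * n)) * P)

end

lemma diffOp_eq_sum {n : ℕ} (c : Raiz n → Pol n) (P : Pol n) (S : Finset (Raiz n))
    (hS : P.vars ⊆ S) : diffOp c P = ∑ η ∈ S, c η * pderiv η P := by
  refine Finset.sum_subset hS fun η _ hη => ?_
  rw [pderiv_eq_zero_of_notMem_vars hη, mul_zero]

lemma diffOp_add {n : ℕ} (c : Raiz n → Pol n) (P Q : Pol n) :
    diffOp c (P + Q) = diffOp c P + diffOp c Q := by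
  classical
  rw [diffOp_eq_sum c (P+Q) (P.vars ∪ Q.vars ∪ (P+Q).vars) (by intro x hx; simp [hx]),
    diffOp_eq_sum c P (P.vars ∪ Q.vars ∪ (P+Q).vars) (by intro x hx; simp [hx]),
    diffOp_eq_sum c Q (P.vars ∪ Q.vars ∪ (P+Q).vars) (by intro x hx; simp [hx]),
    ← Finset.sum_add_distrib]
  simp [mul_add]

lemma diffOp_C {n : ℕ} (c : Raiz n → Pol n) (a : ℚ) : diffOp c (C a) = 0 := by
  simp [diffOp, vars_C]

lemma diffOp_mul_X {n : ℕ} (c : Raiz n → Pol n) (P : Pol n) (η : Raiz n) :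
    diffOp c (P * X η) = diffOp c P * X η + c η * P := by
  classical
  rw [diffOp_eq_sum c (P * X η) (insert η (P.vars ∪ (P * X η).vars)) (by intro x hx; simp [hx]),
    diffOp_eq_sum c P (insert η (P.vars ∪ (P * X η).vars)) (by intro x hx; simp [hx])]
  have key : ∀ η' ∈ insert η (P.vars ∪ (P * X η).vars),
      c η' * pderiv η' (P * X η) = c η' * pderiv η' P * X η + (if η' = η then c η' * P else 0) := by
    intro η' _
    rw [pderiv_mul]
    by_cases h : η' = η
    · subst h; simp [mul_add, mul_comm, mul_assoc, mul_left_comm]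
    · simp [h, mul_assoc]
  rw [Finset.sum_congr rfl key, Finset.sum_add_distrib, Finset.sum_ite_eq' _ η (fun η' => c η' * P),
    if_pos (Finset.mem_insert_self _ _), Finset.sum_mul]

lemma diffOp_c_sum {n : ℕ} (s : Finset ℕ) (c : ℕ → Raiz n → Pol n) (P : Pol n) :
    diffOp (fun η => ∑ t ∈ s, c t η) P = ∑ t ∈ s, diffOp (c t) P := by
  unfold diffOp
  rw [Finset.sum_comm]
  exact Finset.sum_congr rfl fun η _ => by rw [Finset.sum_mul]

lemma diffOp_c_sub {n : ℕ} (c₁ c₂ : Raiz n → Pol n) (P : Pol n) :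
    diffOp (fun η => c₁ η - c₂ η) P = diffOp c₁ P - diffOp c₂ P := by
  unfold diffOp
  rw [← Finset.sum_sub_distrib]
  exact Finset.sum_congr rfl fun η _ => by rw [sub_mul]

lemma diffOp_c_add' {n : ℕ} (c₁ c₂ : Raiz n → Pol n) (P : Pol n) :
    diffOp (fun η => c₁ η + c₂ η) P = diffOp c₁ P + diffOp c₂ P := by
  unfold diffOp
  rw [← Finset.sum_add_distrib]
  exact Finset.sum_congr rfl fun η _ => by rw [add_mul]


lemma zeta_X {n m : ℕ} (h : n ∣ m) (ϑ : Raiz m) :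
    zeta h (X ϑ) = X (Raiz.zetaR h ϑ) := rename_X _ _

lemma master_single {n m : ℕ} (h : n ∣ m) (cN : Raiz n → Pol n) (cM : Raiz m → Pol m)
    (hcomp : ∀ ϑ, cN (Raiz.zetaR h ϑ) = zeta h (cM ϑ)) (P : Pol m) :
    diffOp cN (zeta h P) = zeta h (diffOp cM P) := by
  induction P using MvPolynomial.induction_on with
  | C a =>
      rw [diffOp_C, show zeta h (C a) = C a from rename_C _ _, diffOp_C, map_zero]
  | add p q hp hq =>
      rw [map_add, diffOp_add, hp, hq, diffOp_add, map_add]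
  | mul_X p ϑ hp =>
      rw [map_mul, zeta_X, diffOp_mul_X, hp, hcomp, diffOp_mul_X, map_add, map_mul, map_mul,
        zeta_X]

lemma master {n m : ℕ} (h : n ∣ m) (s : Finset ℕ) (cN : Raiz n → Pol n)
    (cM : ℕ → Raiz m → Pol m)
    (hcomp : ∀ ϑ, cN (Raiz.zetaR h ϑ) = ∑ t ∈ s, zeta h (cM t ϑ)) (P : Pol m) :
    diffOp cN (zeta h P) = zeta h (∑ t ∈ s, diffOp (cM t) P) := by
  rw [← diffOp_c_sum]
  exact master_single h cN _ (fun ϑ => by rw [hcomp]; exact (map_sum _ _ _).symm) P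

lemma fiber_sum {n m : ℕ} [NeZero m] (h : n ∣ m) (i : ZMod n) (j : ZMod m)
    {M : Type*} [AddCommMonoid M] (A : M) :
    ∑ t ∈ fiber n m i, (if ((t : ℕ) : ZMod m) = j then A else 0)
      = if ZMod.castHom h (ZMod n) j = i then A else 0 := by
  classical
  have hval : ((j.val : ℕ) : ZMod m) = j := by
    rw [ZMod.natCast_val, ZMod.cast_id]
  rw [fiber, Finset.sum_filter, Finset.sum_eq_single j.val]
  · rw [hval, if_pos rfl, ZMod.castHom_apply, ← ZMod.natCast_val]
  · intro t ht hne
    have : ((t : ℕ) : ZMod m) ≠ j := by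
      intro e
      exact hne (by rw [← ZMod.val_cast_of_lt (Finset.mem_range.1 ht), e])
    simp [this]
  · intro habs
    exact absurd (Finset.mem_range.2 (ZMod.val_lt j)) habs


noncomputable def cE {n : ℕ} (i : ZMod n) : Raiz n → Pol n := fun η =>
  if η = (i, 1) then 1 else if η.1 = i ∧ 1 < η.2 then X ((i - 1, η.2 - 1) : Raiz n) else 0
noncomputable def cD {n : ℕ} (i : ZMod n) : Raiz n → Pol n := fun θ =>
  (if Raiz.beg θ = (i - 1) + 1 then X θ else 0) - (if Raiz.beg θ = i + 1 then X θ else 0)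
noncomputable def cH {n : ℕ} (i : ZMod n) : Raiz n → Pol n := fun θ =>
  ((if θ.1 = (i + 1) - 1 then X θ else 0) - (if θ.1 = i - 1 then X θ else 0)) + cD i θ
noncomputable def cF {n : ℕ} (i : ZMod n) : Raiz n → Pol n := fun ϑ =>
  (if Raiz.beg ϑ = i + 1 then X ((ϑ.1, 1 + ϑ.2) : Raiz n) else 0)
    - (if ϑ.1 = i - 1 then X ((i, ϑ.2 + 1) : Raiz n) else 0)
lemma beg_simple {n : ℕ} (i : ZMod n) : Raiz.beg (Raiz.simple i) = i := by
  simp [Raiz.beg, Raiz.simple]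

lemma eT_eq {n : ℕ} (i : ZMod n) (P : Pol n) : eT i P = diffOp (cE i) P := by
  unfold eT Etil cE
  congr 1
  funext η
  rw [beg_simple]
  rfl

lemma hT_eq {n : ℕ} (c : ZMod n → ℚ) (i : ZMod n) (P : Pol n) :
    hT c i P = diffOp (cH i) P + c i • P := by
  unfold hT Delta Efrak Bfrak cH cD
  rw [diffOp_c_add', diffOp_c_sub, diffOp_c_sub]
  ring

lemma fT_eq {n : ℕ} (c : ZMod n → ℚ) (i : ZMod n) (P : Pol n) :
    fT c i P = diffOp (cF i) P + X (Raiz.simple i) * (diffOp (cD i) P + c i • P) := by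
  unfold fT Delta Bop Eop Bfrak cF cD
  rw [diffOp_c_sub, diffOp_c_sub, beg_simple]
  rfl

lemma zetaR_beg {n m : ℕ} (h : n ∣ m) (ϑ : Raiz m) :
    Raiz.beg (Raiz.zetaR h ϑ) = ZMod.castHom h (ZMod n) (Raiz.beg ϑ) := by
  simp [Raiz.beg, Raiz.zetaR, map_sub, map_add, map_one, map_natCast]

lemma hcomp_E {n m : ℕ} [NeZero m] (h : n ∣ m) (i : ZMod n) (ϑ : Raiz m) :
    cE i (Raiz.zetaR h ϑ) = ∑ t ∈ fiber n m i, zeta h (cE ((t : ZMod m)) ϑ) := by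
  have step1 : ∀ t : ℕ, zeta h (cE ((t : ZMod m)) ϑ)
      = if ((t : ZMod m)) = ϑ.1 then
          (if ϑ.2 = 1 then 1
           else X ((ZMod.castHom h (ZMod n) ϑ.1 - 1, ϑ.2 - 1) : Raiz n)) else 0 := by
    intro t
    by_cases h1 : ((t : ZMod m)) = ϑ.1
    · by_cases h2 : ϑ.2 = 1
      · have hϑ : ϑ = (((t : ZMod m)), 1) := Prod.ext h1.symm h2
        rw [cE, if_pos hϑ, map_one, if_pos h1, if_pos h2]
      · have h2' : 1 < ϑ.2 := lt_of_le_of_ne ϑ.2.one_le (Ne.symm h2)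
        have hϑ : ϑ ≠ (((t : ZMod m)), 1) := fun e => h2 (congrArg Prod.snd e)
        rw [cE, if_neg hϑ, if_pos ⟨h1.symm, h2'⟩, zeta_X, if_pos h1, if_neg h2]
        simp [Raiz.zetaR, map_sub, map_one, h1]
    · have h1' : ϑ.1 ≠ ((t : ZMod m)) := fun e => h1 e.symm
      rw [if_neg h1]
      simp [cE, h1', Prod.ext_iff]
  rw [Finset.sum_congr rfl fun t _ => step1 t, fiber_sum h i ϑ.1]
  by_cases hq : ZMod.castHom h (ZMod n) ϑ.1 = i
  · by_cases h2 : ϑ.2 = 1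
    · simp [cE, Raiz.zetaR, hq, h2, Prod.ext_iff]
    · have h2' : 1 < ϑ.2 := lt_of_le_of_ne ϑ.2.one_le (Ne.symm h2)
      simp [cE, Raiz.zetaR, hq, h2, h2', Prod.ext_iff]
  · rw [ZMod.castHom_apply] at hq
    simp [cE, Raiz.zetaR, hq, Prod.ext_iff]

lemma hcomp_D {n m : ℕ} [NeZero m] (h : n ∣ m) (i : ZMod n) (ϑ : Raiz m) :
    cD i (Raiz.zetaR h ϑ) = ∑ t ∈ fiber n m i, zeta h (cD ((t : ZMod m)) ϑ) := by
  have step1 : ∀ t : ℕ, zeta h (cD ((t : ZMod m)) ϑ)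
      = (if ((t : ZMod m)) = Raiz.beg ϑ then X (Raiz.zetaR h ϑ) else 0)
        - (if ((t : ZMod m)) = Raiz.beg ϑ - 1 then X (Raiz.zetaR h ϑ) else 0) := by
    intro t
    rw [cD, map_sub]
    congr 1
    · rw [apply_ite (zeta h), zeta_X, map_zero]
      exact if_congr (by rw [sub_add_cancel, eq_comm]) rfl rfl
    · rw [apply_ite (zeta h), zeta_X, map_zero]
      exact if_congr (by rw [eq_sub_iff_add_eq, eq_comm]) rfl rfl
  rw [Finset.sum_congr rfl fun t _ => step1 t, Finset.sum_sub_distrib,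
    fiber_sum h i (Raiz.beg ϑ), fiber_sum h i (Raiz.beg ϑ - 1), cD, zetaR_beg]
  congr 1
  · exact if_congr (by rw [sub_add_cancel]) rfl rfl
  · exact if_congr (by rw [map_sub, map_one, sub_eq_iff_eq_add]) rfl rfl

lemma hcomp_H {n m : ℕ} [NeZero m] (h : n ∣ m) (i : ZMod n) (ϑ : Raiz m) :
    cH i (Raiz.zetaR h ϑ) = ∑ t ∈ fiber n m i, zeta h (cH ((t : ZMod m)) ϑ) := by
  have step1 : ∀ t : ℕ, zeta h (cH ((t : ZMod m)) ϑ)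
      = ((if ((t : ZMod m)) = ϑ.1 then X (Raiz.zetaR h ϑ) else 0)
          - (if ((t : ZMod m)) = ϑ.1 + 1 then X (Raiz.zetaR h ϑ) else 0))
        + zeta h (cD ((t : ZMod m)) ϑ) := by
    intro t
    rw [cH, map_add]
    congr 1
    rw [map_sub]
    congr 1
    · rw [apply_ite (zeta h), zeta_X, map_zero]
      exact if_congr (by rw [add_sub_cancel_right, eq_comm]) rfl rfl
    · rw [apply_ite (zeta h), zeta_X, map_zero]
      exact if_congr (by rw [eq_sub_iff_add_eq, eq_comm]) rfl rfl
  rw [Finset.sum_congr rfl fun t _ => step1 t, Finset.sum_add_distrib, Finset.sum_sub_distrib,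
    fiber_sum h i ϑ.1, fiber_sum h i (ϑ.1 + 1), ← hcomp_D h i ϑ, cH]
  have hz1 : (Raiz.zetaR h ϑ).1 = ZMod.castHom h (ZMod n) ϑ.1 := rfl
  rw [hz1]
  congr 1
  congr 1
  · exact if_congr (by rw [add_sub_cancel_right]) rfl rfl
  · exact if_congr (by rw [map_add, map_one, eq_sub_iff_add_eq]) rfl rfl

lemma hcomp_F {n m : ℕ} [NeZero m] (h : n ∣ m) (i : ZMod n) (ϑ : Raiz m) :
    cF i (Raiz.zetaR h ϑ) = ∑ t ∈ fiber n m i, zeta h (cF ((t : ZMod m)) ϑ) := by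
  have step1 : ∀ t : ℕ, zeta h (cF ((t : ZMod m)) ϑ)
      = (if ((t : ZMod m)) = Raiz.beg ϑ - 1
            then X ((ZMod.castHom h (ZMod n) ϑ.1, 1 + ϑ.2) : Raiz n) else 0)
        - (if ((t : ZMod m)) = ϑ.1 + 1
            then X ((ZMod.castHom h (ZMod n) ϑ.1 + 1, ϑ.2 + 1) : Raiz n) else 0) := by
    intro t
    rw [cF, map_sub]
    congr 1
    · rw [apply_ite (zeta h), zeta_X, map_zero]
      refine if_congr (by rw [eq_sub_iff_add_eq, eq_comm]) ?_ rfl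
      rfl
    · by_cases h1 : ((t : ZMod m)) = ϑ.1 + 1
      · rw [if_pos (by rw [h1, add_sub_cancel_right]), if_pos h1, zeta_X]
        have : ZMod.castHom h (ZMod n) ((t : ZMod m)) = ZMod.castHom h (ZMod n) ϑ.1 + 1 := by
          rw [h1, map_add, map_one]
        simp [Raiz.zetaR, this]
      · rw [if_neg (fun e => h1 ((by rw [e, sub_add_cancel] :
            ϑ.1 + 1 = ((t : ZMod m))).symm)), if_neg h1, map_zero]
  rw [Finset.sum_congr rfl fun t _ => step1 t, Finset.sum_sub_distrib,
    fiber_sum h i (Raiz.beg ϑ - 1), fiber_sum h i (ϑ.1 + 1), cF, zetaR_beg]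
  have hz1 : (Raiz.zetaR h ϑ).1 = ZMod.castHom h (ZMod n) ϑ.1 := rfl
  have hz2 : (Raiz.zetaR h ϑ).2 = ϑ.2 := rfl
  rw [hz1, hz2]
  congr 1
  · exact if_congr (by rw [map_sub, map_one, sub_eq_iff_eq_add]) rfl rfl
  · by_cases hq : ZMod.castHom h (ZMod n) ϑ.1 = i - 1
    · rw [if_pos hq, if_pos (by rw [map_add, map_one, hq, sub_add_cancel]),
        hq, sub_add_cancel]
    · rw [if_neg hq, if_neg (fun e => hq (by
        rw [map_add, map_one] at e
        rw [← e, add_sub_cancel_right]))]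


/-- With constants `c^{(kn)}_j` at level `kn` and folded constants
`c^{(n)}_i = Σ_{j ≡ i (mod n)} c^{(kn)}_j` at level `n`, the algebra homomorphism
`ζ` intertwines the Chevalley operators: `e_i^{T,(n)} ∘ ζ = ζ ∘ Σ_{j ≡ i} e_j^{T,(kn)}`,
and similarly for `f` and `h`. -/
theorem zeta_intertwines_chevalley (n k : ℕ) (hn : 2 ≤ n) (hk : 2 ≤ k)
    (c' : ZMod (k * n) → ℚ) (c : ZMod n → ℚ)
    (hc : ∀ i : ZMod n, c i = ∑ t ∈ fiber n (k * n) i, c' ((t : ZMod (k * n))))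
    (i : ZMod n) (P : Pol (k * n)) :
    eT i (zeta (dvd_mul_left n k) P)
      = zeta (dvd_mul_left n k)
          (∑ t ∈ fiber n (k * n) i, eT ((t : ZMod (k * n))) P) ∧
    fT c i (zeta (dvd_mul_left n k) P)
      = zeta (dvd_mul_left n k)
          (∑ t ∈ fiber n (k * n) i, fT c' ((t : ZMod (k * n))) P) ∧
    hT c i (zeta (dvd_mul_left n k) P)
      = zeta (dvd_mul_left n k)
          (∑ t ∈ fiber n (k * n) i, hT c' ((t : ZMod (k * n))) P) := by
  haveI : NeZero (k * n) := ⟨Nat.mul_ne_zero (by omega) (by omega)⟩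
  have hm : n ∣ k * n := dvd_mul_left n k
  refine ⟨?_, ?_, ?_⟩
  · have hsum : (∑ t ∈ fiber n (k * n) i, eT ((t : ZMod (k * n))) P)
        = ∑ t ∈ fiber n (k * n) i, diffOp (cE ((t : ZMod (k * n)))) P :=
      Finset.sum_congr rfl fun t _ => eT_eq _ P
    rw [eT_eq, hsum]
    exact master hm _ (cE i) _ (fun ϑ => hcomp_E hm i ϑ) P
  · have hfib : ∀ t ∈ fiber n (k * n) i,
        Raiz.zetaR hm (Raiz.simple ((t : ZMod (k * n)))) = Raiz.simple i := by
      intro t ht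
      have h1 : ((t : ℕ) : ZMod n) = i := (Finset.mem_filter.1 ht).2
      simp [Raiz.zetaR, Raiz.simple, map_natCast, h1]
    have hrhs : ∀ t ∈ fiber n (k * n) i, zeta hm (fT c' ((t : ZMod (k * n))) P)
        = zeta hm (diffOp (cF ((t : ZMod (k * n)))) P)
          + X (Raiz.simple i) * (zeta hm (diffOp (cD ((t : ZMod (k * n)))) P)
            + c' ((t : ZMod (k * n))) • zeta hm P) := by
      intro t ht
      rw [fT_eq, map_add, map_mul, zeta_X, hfib t ht, map_add, map_smul]
    rw [fT_eq, map_sum, Finset.sum_congr rfl hrhs, Finset.sum_add_distrib, ← Finset.mul_sum]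
    congr 1
    · rw [master hm _ (cF i) _ (fun ϑ => hcomp_F hm i ϑ) P, map_sum]
    · congr 1
      rw [Finset.sum_add_distrib]
      congr 1
      · rw [master hm _ (cD i) _ (fun ϑ => hcomp_D hm i ϑ) P, map_sum]
      · rw [← Finset.sum_smul, ← hc i]
  · have hrhs : (∑ t ∈ fiber n (k * n) i, hT c' ((t : ZMod (k * n))) P)
        = (∑ t ∈ fiber n (k * n) i, diffOp (cH ((t : ZMod (k * n)))) P)
          + ∑ t ∈ fiber n (k * n) i, c' ((t : ZMod (k * n))) • P := by
      rw [← Finset.sum_add_distrib]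
      exact Finset.sum_congr rfl fun t _ => hT_eq c' _ P
    rw [hT_eq, hrhs, map_add, master hm _ (cH i) _ (fun ϑ => hcomp_H hm i ϑ) P]
    congr 1
    rw [map_sum, Finset.sum_congr rfl (fun t _ => map_smul (zeta hm) _ P),
      ← Finset.sum_smul, ← hc i]
end

section
/- For every raiz θ ∈ R⁺(n), the polynomial P_n satisfies: Ẽ(θ)(P_n) = 1 if dim θ = α_n (i.e. θ has length n), and Ẽ(θ)(P_n) = 0 otherwise. -/
/-!
Common setup: raiz for the cyclic quiver `Ã_{n-1}`, the polynomial algebra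
`N = ℚ[x_θ : θ ∈ R⁺(n)]`, and the locally finite differential operators
`E(θ)`, `Ẽ(θ)`, `B(θ)`, `𝔅_i`, `𝔈_i`, `Δ_i`, and the Chevalley operators
`e_i^T`, `h_i^T`, `f_i^T`, following Finkelberg–Kuznetsov.
-/

open MvPolynomial

/-!
`Ẽ(θ)` is the derivation sending `x_η` to its coefficient at `∂/∂x_η`, so `Ẽ(θ)(P_n)` is a signed
sum over Kostant partitions `κ` of `α_n` with a marked part `η ∈ κ`, the part differentiated, and
only `η = θ` and `η = ϑ⌣θ` contribute. A Kostant partition of `α_n` is a tiling of the cycle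
`ℤ/nℤ` by arcs, so its parts are distinct and each class ends at most one of them. When `θ` is
shorter than `n`, the tile `ϑ` ending just before `θ` begins exists, and gluing a marked `θ` to
it, or cutting a marked `ϑ⌣θ` back into `θ` and `ϑ`, keeps the monomial `x_ϑ x^{κ∖η}` and changes
the number of parts by one, so the terms cancel in pairs. When `θ` has length `n` the only term
is `κ = {θ}`, and a longer `θ` is not a part of any such `κ`.
-/

namespace MvPolynomial

variable {R σ : Type*} [CommSemiring R]

theorem derivation_eq_sum_pderiv (D : Derivation R (MvPolynomial σ R) (MvPolynomial σ R))
    (P : MvPolynomial σ R) : D P = ∑ i ∈ P.vars, D (X i) * pderiv i P := by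
  let D' : Derivation R (MvPolynomial σ R) (MvPolynomial σ R) :=
    ∑ i ∈ P.vars, D (X i) • pderiv i
  have hD' : ∀ Q, D' Q = ∑ i ∈ P.vars, D (X i) * pderiv i Q := fun Q => by
    rw [← Derivation.coeFnAddMonoidHom_apply D', map_sum, Finset.sum_apply]
    rfl
  rw [← hD']
  refine derivation_eq_of_forall_mem_vars fun j hj => ?_
  rw [hD', Finset.sum_eq_single_of_mem j hj fun i _ hij => by
    rw [pderiv_X_of_ne hij.symm, mul_zero], pderiv_X_self, mul_one]

end MvPolynomial

namespace Derivation

variable {R A M ι : Type*} [CommSemiring R] [CommSemiring A] [Algebra R A] [AddCommMonoid M]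
  [Module A M] [Module R M] [DecidableEq ι]

theorem leibniz_multiset_prod (D : Derivation R A M) (f : ι → A) (s : Multiset ι) :
    D (s.map f).prod = (s.map fun i => ((s.erase i).map f).prod • D (f i)).sum := by
  induction s using Multiset.induction_on with
  | empty => simp
  | cons a s ih =>
    have herase : ∀ i ∈ s, ((a ::ₘ s).erase i).map f = f a ::ₘ (s.erase i).map f := fun i hi => by
      rw [Multiset.erase_cons_tail_of_mem hi, Multiset.map_cons]
    rw [Multiset.map_cons, Multiset.prod_cons, leibniz, ih, Multiset.map_cons, Multiset.sum_cons,
      Multiset.erase_cons_head, Multiset.smul_sum, Multiset.map_map, add_comm]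
    refine congrArg₂ _ rfl (congrArg _ (Multiset.map_congr rfl fun i hi => ?_))
    rw [Function.comp_apply, herase i hi, Multiset.prod_cons, mul_smul]

end Derivation

namespace Raiz

variable {n : ℕ}

/-- The value of `cat ϑ θ` when it is defined. -/
def join (ϑ θ : Raiz n) : Raiz n := (θ.1, ϑ.2 + θ.2)

/-- For `η` ending where `θ` ends and longer than `θ`, the raiz `ϑ` with `ϑ⌣θ = η`. -/
def cut (η θ : Raiz n) : Raiz n := (beg θ - 1, η.2 - θ.2)

theorem beg_sub_one (θ : Raiz n) : beg θ - 1 = θ.1 - ((θ.2 : ℕ) : ZMod n) := by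
  rw [beg, add_sub_cancel_right]

theorem len_lt_len_join (ϑ θ : Raiz n) : θ.2 < (join ϑ θ).2 := PNat.lt_add_left θ.2 ϑ.2

theorem join_ne (ϑ θ : Raiz n) : join ϑ θ ≠ θ := fun h =>
  (len_lt_len_join ϑ θ).ne (congrArg Prod.snd h).symm

theorem join_cut {η θ : Raiz n} (hend : η.1 = θ.1) (hlen : θ.2 < η.2) : join (cut η θ) θ = η :=
  Prod.ext hend.symm (PNat.sub_add_of_lt hlen)

theorem cut_join {ϑ θ : Raiz n} (hϑ : ϑ.1 = beg θ - 1) : cut (join ϑ θ) θ = ϑ :=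
  Prod.ext hϑ.symm PNat.add_sub

theorem dimAt_pos_iff {θ : Raiz n} {j : ZMod n} :
    0 < θ.dimAt j ↔ ∃ t < (θ.2 : ℕ), θ.1 - (t : ZMod n) = j := by
  simp [dimAt, Finset.card_pos, Finset.filter_nonempty_iff]

theorem sum_dimAt [NeZero n] (θ : Raiz n) : ∑ j, θ.dimAt j = θ.2 := by
  rw [← Finset.card_range (θ.2 : ℕ), Finset.card_eq_sum_card_fiberwise
    (f := fun t : ℕ => θ.1 - (t : ZMod n)) fun _ _ => Finset.mem_univ _]
  rfl

theorem dimAt_eq_one_of_len_eq [NeZero n] {θ : Raiz n} (h : (θ.2 : ℕ) = n) (j : ZMod n) :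
    θ.dimAt j = 1 := by
  refine Finset.card_eq_one.2 ⟨(θ.1 - j).val, Finset.ext fun t => ?_⟩
  simp only [Finset.mem_filter, Finset.mem_range, Finset.mem_singleton, h]
  constructor
  · rintro ⟨ht, hj⟩
    rw [← hj, sub_sub_cancel, ZMod.val_natCast_of_lt ht]
  · rintro rfl
    exact ⟨ZMod.val_lt _, by rw [ZMod.natCast_zmod_val, sub_sub_cancel]⟩

theorem forall_dimAt_eq_one_iff [NeZero n] {θ : Raiz n} :
    (∀ j, θ.dimAt j = 1) ↔ (θ.2 : ℕ) = n := by
  refine ⟨fun h => ?_, dimAt_eq_one_of_len_eq⟩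
  simpa [h, ZMod.card] using (sum_dimAt θ).symm

theorem dimAt_self_pos (θ : Raiz n) : 0 < θ.dimAt θ.1 :=
  dimAt_pos_iff.2 ⟨0, θ.2.pos, by simp⟩

theorem dimAt_add_one_pos {θ : Raiz n} {j : ZMod n} (hj : θ.1 ≠ j) (h : 0 < θ.dimAt j) :
    0 < θ.dimAt (j + 1) := by
  obtain ⟨t, ht, rfl⟩ := dimAt_pos_iff.1 h
  obtain ⟨s, rfl⟩ : ∃ s, t = s + 1 := Nat.exists_eq_succ_of_ne_zero fun h0 => hj (by simp [h0])
  exact dimAt_pos_iff.2 ⟨s, by omega, by push_cast; ring⟩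

theorem dimAt_beg_pos (θ : Raiz n) : 0 < θ.dimAt (beg θ) := by
  obtain ⟨s, hs⟩ : ∃ s, (θ.2 : ℕ) = s + 1 := Nat.exists_eq_succ_of_ne_zero θ.2.ne_zero
  exact dimAt_pos_iff.2 ⟨s, by omega, by rw [beg, hs]; push_cast; ring⟩

theorem dimAt_beg_sub_one {θ : Raiz n} (h : (θ.2 : ℕ) < n) : θ.dimAt (beg θ - 1) = 0 := by
  by_contra hne
  obtain ⟨t, ht, hj⟩ := dimAt_pos_iff.1 (Nat.pos_of_ne_zero hne)
  have hdvd : n ∣ (θ.2 : ℕ) - t := by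
    rw [← ZMod.natCast_eq_zero_iff, Nat.cast_sub ht.le, ← sub_sub_sub_cancel_left _ _ θ.1, hj,
      beg_sub_one, sub_self]
  exact absurd (Nat.le_of_dvd (by omega) hdvd) (by omega)

theorem dimAt_join {ϑ θ : Raiz n} (hϑ : ϑ.1 = beg θ - 1) (j : ZMod n) :
    (join ϑ θ).dimAt j = θ.dimAt j + ϑ.dimAt j := by
  simp only [dimAt, Finset.card_filter, join, PNat.add_coe, add_comm (ϑ.2 : ℕ),
    Finset.sum_range_add]
  congr 1
  refine Finset.sum_congr rfl fun t _ => ?_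
  rw [hϑ, beg_sub_one, Nat.cast_add, sub_add_eq_sub_sub]

end Raiz

theorem mem_raizUpTo {n m : ℕ} [NeZero n] {a : Raiz n} : a ∈ raizUpTo n m ↔ (a.2 : ℕ) ≤ m := by
  refine Finset.mem_product.trans ?_
  simp only [Finset.mem_image, Finset.mem_range]
  refine ⟨fun ⟨_, l, hl, hla⟩ => by rw [← hla]; exact hl, fun h => ⟨⟨a.1.val, ZMod.val_lt _,
    ZMod.natCast_zmod_val _⟩, (a.2 : ℕ) - 1, by have := a.2.pos; omega,
    PNat.eq (Nat.sub_add_cancel a.2.pos)⟩⟩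

def IsKostantPartition {n : ℕ} (γ : ZMod n → ℕ) (κ : Multiset (Raiz n)) : Prop :=
  ∀ j, (κ.map fun θ => θ.dimAt j).sum = γ j

namespace IsKostantPartition

open Raiz

variable {n : ℕ} {γ : ZMod n → ℕ} {κ : Multiset (Raiz n)}

theorem join_cons_iff {ϑ θ : Raiz n} (hϑ : ϑ.1 = beg θ - 1) (μ : Multiset (Raiz n)) :
    IsKostantPartition γ (join ϑ θ ::ₘ μ) ↔ IsKostantPartition γ (θ ::ₘ ϑ ::ₘ μ) := by
  simp only [IsKostantPartition, Multiset.map_cons, Multiset.sum_cons, dimAt_join hϑ, add_assoc]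

theorem dimAt_le (h : IsKostantPartition γ κ) {a : Raiz n} (ha : a ∈ κ) (j : ZMod n) :
    a.dimAt j ≤ γ j :=
  h j ▸ Multiset.le_sum_of_mem (Multiset.mem_map_of_mem (fun θ => θ.dimAt j) ha)

theorem len_le_sum [NeZero n] (h : IsKostantPartition γ κ) {a : Raiz n} (ha : a ∈ κ) :
    (a.2 : ℕ) ≤ ∑ j, γ j :=
  sum_dimAt a ▸ Finset.sum_le_sum fun j _ => h.dimAt_le ha j

theorem count_le (h : IsKostantPartition γ κ) (a : Raiz n) : κ.count a ≤ γ a.1 := by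
  obtain ⟨μ, hμ⟩ := Multiset.le_iff_exists_add.1
    (Multiset.le_count_iff_replicate_le (s := κ) (a := a).1 le_rfl)
  calc κ.count a ≤ κ.count a * a.dimAt a.1 := Nat.le_mul_of_pos_right _ (dimAt_self_pos a)
    _ ≤ (κ.map fun θ => θ.dimAt a.1).sum := by
      conv_rhs => rw [hμ]
      simp
    _ = γ a.1 := h a.1

theorem nodup (h : IsKostantPartition (fun _ => 1) κ) : κ.Nodup :=
  Multiset.nodup_iff_count_le_one.2 h.count_le

theorem len_le [NeZero n] (h : IsKostantPartition (fun _ => 1) κ) {a : Raiz n} (ha : a ∈ κ) :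
    (a.2 : ℕ) ≤ n := by
  simpa [ZMod.card] using h.len_le_sum ha

theorem eq_of_dimAt_pos (h : IsKostantPartition (fun _ => 1) κ) {a b : Raiz n} (ha : a ∈ κ)
    (hb : b ∈ κ) {j : ZMod n} (hja : 0 < a.dimAt j) (hjb : 0 < b.dimAt j) : a = b := by
  by_contra hab
  have hsum : _ = 1 := h j
  rw [← Multiset.cons_erase ha,
    ← Multiset.cons_erase ((Multiset.mem_erase_of_ne (Ne.symm hab)).2 hb), Multiset.map_cons,
    Multiset.map_cons, Multiset.sum_cons, Multiset.sum_cons] at hsum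
  omega

theorem eq_of_end_eq (h : IsKostantPartition (fun _ => 1) κ) {a b : Raiz n} (ha : a ∈ κ)
    (hb : b ∈ κ) (hend : a.1 = b.1) : a = b :=
  h.eq_of_dimAt_pos ha hb (dimAt_self_pos a) (hend ▸ dimAt_self_pos b)

theorem eq_singleton_of_len_eq [NeZero n] (h : IsKostantPartition (fun _ => 1) κ) {θ : Raiz n}
    (hθ : θ ∈ κ) (hlen : (θ.2 : ℕ) = n) : κ = {θ} := by
  have hall : ∀ a ∈ κ, a = θ := fun a ha =>
    h.eq_of_dimAt_pos ha hθ (dimAt_self_pos a) (by rw [dimAt_eq_one_of_len_eq hlen]; exact one_pos)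
  ext b
  by_cases hb : b = θ
  · rw [hb, Multiset.count_eq_one_of_mem h.nodup hθ, Multiset.count_singleton_self]
  · rw [Multiset.count_eq_zero_of_notMem fun hb' => hb (hall b hb'), Multiset.count_singleton,
      if_neg hb]

theorem exists_eq_cons_cons (h : IsKostantPartition (fun _ => 1) κ) {θ : Raiz n} (hθ : θ ∈ κ)
    (hlen : (θ.2 : ℕ) < n) : ∃ ϑ μ, ϑ.1 = beg θ - 1 ∧ κ = θ ::ₘ ϑ ::ₘ μ := by
  obtain ⟨ϑ, hϑ, hpos⟩ : ∃ ϑ ∈ κ, 0 < ϑ.dimAt (beg θ - 1) := by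
    by_contra! hc
    have h0 : (κ.map fun ϑ => ϑ.dimAt (beg θ - 1)).sum = 0 := Multiset.sum_eq_zero fun x hx => by
      obtain ⟨ϑ, hϑ, rfl⟩ := Multiset.mem_map.1 hx
      exact Nat.le_zero.1 (hc ϑ hϑ)
    exact one_ne_zero (h _ ▸ h0)
  have hϑθ : ϑ ≠ θ := by
    rintro rfl
    exact hpos.ne' (dimAt_beg_sub_one hlen)
  have hend : ϑ.1 = beg θ - 1 := by
    by_contra hne
    have hcover := dimAt_add_one_pos hne hpos
    rw [sub_add_cancel] at hcover
    exact hϑθ (h.eq_of_dimAt_pos hϑ hθ hcover (dimAt_beg_pos θ))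
  refine ⟨ϑ, (κ.erase θ).erase ϑ, hend, ?_⟩
  rw [Multiset.cons_erase ((Multiset.mem_erase_of_ne hϑθ).2 hϑ), Multiset.cons_erase hθ]

end IsKostantPartition

theorem mem_kostant_iff {n m : ℕ} [NeZero n] {γ : ZMod n → ℕ} (hm : ∑ j, γ j ≤ m)
    {κ : Multiset (Raiz n)} : κ ∈ kostant n γ m ↔ IsKostantPartition γ κ := by
  simp only [kostant, Finset.mem_filter, Multiset.mem_toFinset, Multiset.mem_powerset]
  refine ⟨And.right, fun h => ⟨Multiset.le_iff_count.2 fun a => ?_, h⟩⟩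
  by_cases ha : a ∈ κ
  · have haR : a ∈ raizUpTo n m := mem_raizUpTo.2 ((h.len_le_sum ha).trans hm)
    rw [Multiset.count_nsmul, Multiset.count_eq_one_of_mem (raizUpTo n m).nodup haR, mul_one]
    exact (h.count_le a).trans ((Finset.single_le_sum (fun _ _ => Nat.zero_le _)
      (Finset.mem_univ a.1)).trans hm)
  · simp [Multiset.count_eq_zero_of_notMem ha]

theorem diffOp_eq_mkDerivation {n : ℕ} (c : Raiz n → Pol n) (P : Pol n) :
    diffOp c P = mkDerivation ℚ c P := by
  simp only [diffOp, derivation_eq_sum_pderiv (mkDerivation ℚ c) P, mkDerivation_X]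

theorem xPow_cons {n : ℕ} (a : Raiz n) (κ : Multiset (Raiz n)) :
    xPow (a ::ₘ κ) = X a * xPow κ := by
  simp [xPow]

noncomputable section

open Raiz

variable {n : ℕ}

def markedKostant (n : ℕ) : Finset (Σ _ : Multiset (Raiz n), Raiz n) :=
  (kostant n (fun _ => 1) n).sigma fun κ => κ.toFinset

theorem mem_markedKostant [NeZero n] {κ : Multiset (Raiz n)} {η : Raiz n} :
    ⟨κ, η⟩ ∈ markedKostant n ↔ IsKostantPartition (fun _ => 1) κ ∧ η ∈ κ := by
  rw [markedKostant, Finset.mem_sigma, mem_kostant_iff (by simp [ZMod.card]),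
    Multiset.mem_toFinset]

def etilCoeff (θ η : Raiz n) : Pol n :=
  if η = θ then 1 else if η.1 = θ.1 ∧ θ.2 < η.2 then X (cut η θ) else 0

theorem Etil_eq_mkDerivation (θ : Raiz n) (P : Pol n) :
    Etil θ P = mkDerivation ℚ (etilCoeff θ) P :=
  diffOp_eq_mkDerivation _ P

theorem etilCoeff_self (θ : Raiz n) : etilCoeff θ θ = 1 := if_pos rfl

theorem etilCoeff_join {ϑ θ : Raiz n} (hϑ : ϑ.1 = beg θ - 1) : etilCoeff θ (join ϑ θ) = X ϑ := by
  rw [etilCoeff, if_neg (join_ne ϑ θ), if_pos ⟨rfl, len_lt_len_join ϑ θ⟩, cut_join hϑ]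

/-- The summand of `Ẽ(θ)(P_n)` at a Kostant partition `κ = a.1` whose part `η = a.2` is
the one differentiated. -/
def etilTerm (θ : Raiz n) (a : Σ _ : Multiset (Raiz n), Raiz n) : Pol n :=
  (-1 : ℚ) ^ (Multiset.card a.1 + 1) • (xPow (a.1.erase a.2) * etilCoeff θ a.2)

theorem Etil_Ppoly_eq_sum [NeZero n] (θ : Raiz n) :
    Etil θ (Ppoly n) = ∑ a ∈ markedKostant n, etilTerm θ a := by
  rw [Etil_eq_mkDerivation, Ppoly, map_sum, markedKostant, Finset.sum_sigma]
  refine Finset.sum_congr rfl fun κ hκ => ?_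
  have hnodup := ((mem_kostant_iff (by simp [ZMod.card])).1 hκ).nodup
  rw [Derivation.map_smul, xPow, Derivation.leibniz_multiset_prod, Finset.sum_eq_multiset_sum,
    Multiset.toFinset_val, hnodup.dedup, Multiset.smul_sum, Multiset.map_map]
  simp only [Function.comp_def, etilTerm, mkDerivation_X, smul_eq_mul, xPow]

/-- Glues a marked part `θ` to the part `ϑ` ending just before `θ` begins, and cuts a marked
part `ϑ⌣θ` back into `θ` and `ϑ`. -/
def etilInvolution (θ : Raiz n) (a : Σ _ : Multiset (Raiz n), Raiz n) :
    Σ _ : Multiset (Raiz n), Raiz n :=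
  if a.2 = θ then
    let ϑ := Classical.epsilon fun ϑ => ϑ ∈ a.1 ∧ ϑ.1 = beg θ - 1
    ⟨join ϑ θ ::ₘ (a.1.erase θ).erase ϑ, join ϑ θ⟩
  else if a.2.1 = θ.1 ∧ θ.2 < a.2.2 then ⟨θ ::ₘ cut a.2 θ ::ₘ a.1.erase a.2, θ⟩
  else a

theorem etilInvolution_cons_cons {θ ϑ : Raiz n} {μ : Multiset (Raiz n)}
    (h : IsKostantPartition (fun _ => 1) (θ ::ₘ ϑ ::ₘ μ)) (hϑ : ϑ.1 = beg θ - 1) :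
    etilInvolution θ ⟨θ ::ₘ ϑ ::ₘ μ, θ⟩ = ⟨join ϑ θ ::ₘ μ, join ϑ θ⟩ := by
  have hmem : ϑ ∈ θ ::ₘ ϑ ::ₘ μ := Multiset.mem_cons_of_mem (Multiset.mem_cons_self ϑ μ)
  obtain ⟨hεmem, hεend⟩ := Classical.epsilon_spec (p := fun ϑ' => ϑ' ∈ θ ::ₘ ϑ ::ₘ μ ∧
    ϑ'.1 = beg θ - 1) ⟨ϑ, hmem, hϑ⟩
  rw [etilInvolution, if_pos rfl]
  dsimp only
  rw [h.eq_of_end_eq hεmem hmem (hεend.trans hϑ.symm), Multiset.erase_cons_head,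
    Multiset.erase_cons_head]

theorem etilInvolution_join_cons {θ ϑ : Raiz n} (μ : Multiset (Raiz n)) (hϑ : ϑ.1 = beg θ - 1) :
    etilInvolution θ ⟨join ϑ θ ::ₘ μ, join ϑ θ⟩ = ⟨θ ::ₘ ϑ ::ₘ μ, θ⟩ := by
  rw [etilInvolution, if_neg (join_ne ϑ θ), if_pos ⟨rfl, len_lt_len_join ϑ θ⟩]
  dsimp only
  rw [cut_join hϑ, Multiset.erase_cons_head]

theorem etilInvolution_of_etilCoeff_eq_zero {θ : Raiz n} {a : Σ _ : Multiset (Raiz n), Raiz n}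
    (h : etilCoeff θ a.2 = 0) : etilInvolution θ a = a := by
  unfold etilCoeff at h
  split_ifs at h with h₁ h₂
  · exact absurd h one_ne_zero
  · exact absurd h (X_ne_zero _)
  · rw [etilInvolution, if_neg h₁, if_neg h₂]

theorem etilTerm_eq_zero_of_etilCoeff_eq_zero {θ : Raiz n} {a : Σ _ : Multiset (Raiz n), Raiz n}
    (h : etilCoeff θ a.2 = 0) : etilTerm θ a = 0 := by
  rw [etilTerm, h, mul_zero, smul_zero]

theorem etilTerm_cons_cons_add_etilTerm_join_cons {θ ϑ : Raiz n} (μ : Multiset (Raiz n))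
    (hϑ : ϑ.1 = beg θ - 1) :
    etilTerm θ ⟨θ ::ₘ ϑ ::ₘ μ, θ⟩ + etilTerm θ ⟨join ϑ θ ::ₘ μ, join ϑ θ⟩ = 0 := by
  simp only [etilTerm, Multiset.erase_cons_head, etilCoeff_self, etilCoeff_join hϑ,
    Multiset.card_cons, xPow_cons, pow_succ, mul_neg_one, neg_smul, mul_one, mul_comm (xPow μ)]
  exact neg_add_cancel _

theorem markedKostant_cases [NeZero n] {θ : Raiz n} (hlen : (θ.2 : ℕ) < n)
    {a : Σ _ : Multiset (Raiz n), Raiz n} (ha : a ∈ markedKostant n) :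
    etilCoeff θ a.2 = 0 ∨ ∃ ϑ μ, ϑ.1 = beg θ - 1 ∧
      IsKostantPartition (fun _ => 1) (θ ::ₘ ϑ ::ₘ μ) ∧
      (a = ⟨θ ::ₘ ϑ ::ₘ μ, θ⟩ ∨ a = ⟨join ϑ θ ::ₘ μ, join ϑ θ⟩) := by
  obtain ⟨κ, η⟩ := a
  obtain ⟨hκ, hη⟩ := mem_markedKostant.1 ha
  by_cases hηθ : η = θ
  · subst hηθ
    obtain ⟨ϑ, μ, hϑ, rfl⟩ := hκ.exists_eq_cons_cons hη hlen
    exact Or.inr ⟨ϑ, μ, hϑ, hκ, Or.inl rfl⟩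
  by_cases hext : η.1 = θ.1 ∧ θ.2 < η.2
  · have hjoin := join_cut hext.1 hext.2
    have hϑ : (cut η θ).1 = beg θ - 1 := rfl
    refine Or.inr ⟨cut η θ, κ.erase η, hϑ, ?_, Or.inr ?_⟩
    · rw [← IsKostantPartition.join_cons_iff hϑ, hjoin, Multiset.cons_erase hη]
      exact hκ
    · rw [hjoin, Multiset.cons_erase hη]
  · exact Or.inl (by rw [etilCoeff, if_neg hηθ, if_neg hext])

theorem sum_etilTerm_eq_zero [NeZero n] {θ : Raiz n} (hlen : (θ.2 : ℕ) < n) :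
    ∑ a ∈ markedKostant n, etilTerm θ a = 0 := by
  have hmem {ϑ μ} (hϑ : ϑ.1 = beg θ - 1) (hκ : IsKostantPartition (fun _ => 1) (θ ::ₘ ϑ ::ₘ μ)) :
      ⟨θ ::ₘ ϑ ::ₘ μ, θ⟩ ∈ markedKostant n ∧ ⟨join ϑ θ ::ₘ μ, join ϑ θ⟩ ∈ markedKostant n :=
    ⟨mem_markedKostant.2 ⟨hκ, Multiset.mem_cons_self _ _⟩,
      mem_markedKostant.2
        ⟨(IsKostantPartition.join_cons_iff hϑ μ).2 hκ, Multiset.mem_cons_self _ _⟩⟩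
  refine Finset.sum_involution (fun a _ => etilInvolution θ a) (fun a ha => ?_) (fun a ha => ?_)
    (fun a ha => ?_) (fun a ha => ?_) <;>
    obtain h0 | ⟨ϑ, μ, hϑ, hκ, rfl | rfl⟩ := markedKostant_cases hlen ha
  · rw [etilInvolution_of_etilCoeff_eq_zero h0, etilTerm_eq_zero_of_etilCoeff_eq_zero h0, add_zero]
  · rw [etilInvolution_cons_cons hκ hϑ, etilTerm_cons_cons_add_etilTerm_join_cons μ hϑ]
  · rw [etilInvolution_join_cons μ hϑ, add_comm, etilTerm_cons_cons_add_etilTerm_join_cons μ hϑ]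
  · exact fun hne => absurd (etilTerm_eq_zero_of_etilCoeff_eq_zero h0) hne
  · rw [etilInvolution_cons_cons hκ hϑ]
    exact fun _ h => join_ne ϑ θ (congrArg Sigma.snd h)
  · rw [etilInvolution_join_cons μ hϑ]
    exact fun _ h => join_ne ϑ θ (congrArg Sigma.snd h).symm
  · rwa [etilInvolution_of_etilCoeff_eq_zero h0]
  · rw [etilInvolution_cons_cons hκ hϑ]; exact (hmem hϑ hκ).2
  · rw [etilInvolution_join_cons μ hϑ]; exact (hmem hϑ hκ).1
  · simp only [etilInvolution_of_etilCoeff_eq_zero h0]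
  · simp only [etilInvolution_cons_cons hκ hϑ, etilInvolution_join_cons μ hϑ]
  · simp only [etilInvolution_join_cons μ hϑ, etilInvolution_cons_cons hκ hϑ]

theorem etilTerm_eq_zero [NeZero n] {θ : Raiz n} (hlen : n ≤ (θ.2 : ℕ))
    {a : Σ _ : Multiset (Raiz n), Raiz n} (ha : a ∈ markedKostant n) (hne : a.2 ≠ θ) :
    etilTerm θ a = 0 := by
  obtain ⟨hκ, hη⟩ := mem_markedKostant.1 ha
  have hshort : a.2.2 ≤ θ.2 := PNat.coe_le_coe _ _ |>.1 ((hκ.len_le hη).trans hlen)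
  exact etilTerm_eq_zero_of_etilCoeff_eq_zero
    (by rw [etilCoeff, if_neg hne, if_neg fun h => hshort.not_gt h.2])

theorem sum_etilTerm_of_len_eq [NeZero n] {θ : Raiz n} (hlen : (θ.2 : ℕ) = n) :
    ∑ a ∈ markedKostant n, etilTerm θ a = 1 := by
  have hmem : ⟨{θ}, θ⟩ ∈ markedKostant n :=
    mem_markedKostant.2
      ⟨fun j => by simp [dimAt_eq_one_of_len_eq hlen], Multiset.mem_singleton_self θ⟩
  rw [Finset.sum_eq_single_of_mem _ hmem fun a ha hne => etilTerm_eq_zero hlen.ge ha fun h => ?_]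
  · simp [etilTerm, etilCoeff_self, xPow]
  · obtain ⟨κ, η⟩ := a
    obtain ⟨hκ, hη⟩ := mem_markedKostant.1 ha
    subst h
    exact hne (by rw [hκ.eq_singleton_of_len_eq hη hlen])

theorem sum_etilTerm_of_len_gt [NeZero n] {θ : Raiz n} (hlen : n < (θ.2 : ℕ)) :
    ∑ a ∈ markedKostant n, etilTerm θ a = 0 := by
  refine Finset.sum_eq_zero fun a ha => etilTerm_eq_zero hlen.le ha fun h => ?_
  obtain ⟨hκ, hη⟩ := mem_markedKostant.1 ha
  exact hlen.not_ge (h ▸ hκ.len_le hη)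

end

open Classical in
/-- For every raiz `θ`, `Ẽ(θ)(P_n) = 1` if `dim θ = α_n` (the all-ones vector),
and `Ẽ(θ)(P_n) = 0` otherwise. -/
theorem Etil_Ppoly {n : ℕ} (hn : 2 ≤ n) (θ : Raiz n) :
    Etil θ (Ppoly n) = if (∀ j : ZMod n, θ.dimAt j = 1) then 1 else 0 := by
  have : NeZero n := ⟨by omega⟩
  rw [Etil_Ppoly_eq_sum]
  rcases lt_trichotomy (θ.2 : ℕ) n with hlt | heq | hgt
  · rw [if_neg (Raiz.forall_dimAt_eq_one_iff.not.2 hlt.ne), sum_etilTerm_eq_zero hlt]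
  · rw [if_pos (Raiz.forall_dimAt_eq_one_iff.2 heq), sum_etilTerm_of_len_eq heq]
  · rw [if_neg (Raiz.forall_dimAt_eq_one_iff.not.2 hgt.ne'), sum_etilTerm_of_len_gt hgt]
end
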